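/- arXiv:2504.14549 — 4 statements merged into one kernel-verified Lean document; each statement's English description precedes it below -/
import Mathlib

section
/- Let p ≥ 1 and k ∈ ℝ. For all real numbers a, b with a ≥ b and all s, t ≥ 0, one has (a − b)^{p−1}·((a − k)_+·s − (b − k)_+·t) ≥ ((a − k)_+ − (b − k)_+)^{p−1}·((a − k)_+·s − (b − k)_+·t). -/
/-- Pointwise integrand estimate (3.2) in the nonlocal Caccioppoli inequality. -/
theorem stmt_1 (p k : ℝ) (hp : 1 ≤ p) (a b s t : ℝ) (hab : a ≥ b)
    (hs : 0 ≤ s) (ht : 0 ≤ t) :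
    (a - b) ^ (p - 1) * (max (a - k) 0 * s - max (b - k) 0 * t) ≥
      (max (a - k) 0 - max (b - k) 0) ^ (p - 1) * (max (a - k) 0 * s - max (b - k) 0 * t) := by
  set C := max (a - k) 0 * s - max (b - k) 0 * t with hC
  have hB0 : 0 ≤ max (a - k) 0 - max (b - k) 0 := by
    rcases le_total (b - k) 0 with h | h
    · simp [max_eq_right h, le_max_iff]
    · have : max (b - k) 0 = b - k := max_eq_left h
      rw [this]
      exact sub_nonneg.2 (le_max_of_le_left (by linarith))
  have hBA : max (a - k) 0 - max (b - k) 0 ≤ a - b := by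
    rcases le_total (a - k) 0 with h | h
    · have : max (a - k) 0 = 0 := max_eq_right h
      have hb : max (b - k) 0 = 0 := max_eq_right (by linarith)
      simp [this, hb]
      linarith
    · rw [max_eq_left h]
      rcases le_total (b - k) 0 with h2 | h2
      · rw [max_eq_right h2]; linarith
      · rw [max_eq_left h2]; linarith
  rcases le_or_gt 0 C with hc | hc
  · exact mul_le_mul_of_nonneg_right
      (Real.rpow_le_rpow hB0 hBA (by linarith)) hc
  · have hbk : 0 < b - k := by
      by_contra h
      push_neg at h
      have : max (b - k) 0 = 0 := max_eq_right h
      rw [hC, this] at hc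
      nlinarith [le_max_right (a - k) (0:ℝ), mul_nonneg (le_max_right (a-k) (0:ℝ)) hs]
    have hak : 0 < a - k := by linarith
    rw [max_eq_left hak.le, max_eq_left hbk.le]
    have : a - k - (b - k) = a - b := by ring
    rw [this]
end

section
/- For every p > 1 there exists a constant c > 0 depending only on p such that for all real numbers w₁ ≥ w₂ ≥ 0 and all τ₁, τ₂ ≥ 0, (w₁ − w₂)^{p−1}·(w₁·τ₁^p − w₂·τ₂^p) ≥ (1/2)·(w₁ − w₂)^p·(max{τ₁, τ₂})^p − c·w₁^p·|τ₁ − τ₂|^p. -/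
open Real

/-- `a^(p-1) * a = a^p` for `a ≥ 0`, `p ≠ 0`. -/
private lemma rpow_pred_mul {a p : ℝ} (ha : 0 ≤ a) (hp : p ≠ 0) :
    a ^ (p - 1) * a = a ^ p := by
  have h : p - 1 + 1 = p := by ring
  calc a ^ (p - 1) * a = a ^ (p - 1) * a ^ (1 : ℝ) := by rw [Real.rpow_one]
    _ = a ^ (p - 1 + 1) := (Real.rpow_add' ha (by rw [h]; exact hp)).symm
    _ = a ^ p := by rw [h]

/-- Mean value type bound: `b^p - a^p ≤ p * b^(p-1) * (b - a)` for `0 ≤ a ≤ b`, `1 ≤ p`. -/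
private lemma rpow_sub_rpow_le {a b p : ℝ} (ha : 0 ≤ a) (hab : a ≤ b) (hp : 1 ≤ p) :
    b ^ p - a ^ p ≤ p * b ^ (p - 1) * (b - a) := by
  have hpne : p ≠ 0 := by positivity
  rcases eq_or_lt_of_le (ha.trans hab) with hb | hb
  · have ha0 : a = 0 := le_antisymm (hab.trans_eq hb.symm) ha
    simp [← hb, ha0, Real.zero_rpow hpne]
  · have hbne : b ≠ 0 := ne_of_gt hb
    have ht0 : 0 ≤ a / b := div_nonneg ha hb.le
    have hs : -1 ≤ a / b - 1 := by linarith
    have hbern := one_add_mul_self_le_rpow_one_add hs hp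
    have h1 : 1 + (a / b - 1) = a / b := by ring
    rw [h1] at hbern
    have hbp : 0 < b ^ p := Real.rpow_pos_of_pos hb p
    have hta : a / b * b = a := div_mul_cancel₀ a hbne
    have htp : (a / b) ^ p * b ^ p = a ^ p := by
      rw [← Real.mul_rpow ht0 hb.le, hta]
    have hb1 : b ^ (p - 1) * b = b ^ p := rpow_pred_mul hb.le hpne
    have hx : a / b * b ^ p = a * b ^ (p - 1) := by
      calc a / b * b ^ p = a / b * b * b ^ (p - 1) := by rw [← hb1]; ring
        _ = a * b ^ (p - 1) := by rw [hta]
    have hx2 : p * (a / b * b ^ p) = p * (a * b ^ (p - 1)) := by rw [hx]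
    have hb2 : p * (b ^ (p - 1) * b) = p * b ^ p := by rw [hb1]
    have hmain := mul_le_mul_of_nonneg_right hbern hbp.le
    rw [htp] at hmain
    nlinarith [hmain, hx2, hb2]

set_option maxHeartbeats 1000000 in
/-- Core pointwise estimate of the nonlocal Caccioppoli inequality (Theorem 1.3). -/
theorem stmt_3 (p : ℝ) (hp : 1 < p) :
    ∃ c : ℝ, 0 < c ∧ ∀ w₁ w₂ τ₁ τ₂ : ℝ, w₁ ≥ w₂ → w₂ ≥ 0 → 0 ≤ τ₁ → 0 ≤ τ₂ →
      (w₁ - w₂) ^ (p - 1) * (w₁ * τ₁ ^ p - w₂ * τ₂ ^ p) ≥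
        (1 / 2) * (w₁ - w₂) ^ p * (max τ₁ τ₂) ^ p - c * w₁ ^ p * |τ₁ - τ₂| ^ p := by
  have hp0 : 0 < p := by linarith
  have hpne : p ≠ 0 := ne_of_gt hp0
  have hp1 : 0 ≤ p - 1 := by linarith
  refine ⟨(2 * p) ^ p, Real.rpow_pos_of_pos (by linarith) p, ?_⟩
  intro w₁ w₂ τ₁ τ₂ h12 h2 ht1 ht2
  set w : ℝ := w₁ - w₂ with hw
  clear_value w
  have hw0 : 0 ≤ w := by rw [hw]; linarith
  have hw1 : 0 ≤ w₁ := le_trans h2 h12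
  have hwp : 0 ≤ w ^ (p - 1) := Real.rpow_nonneg hw0 _
  have hcw : 0 ≤ (2 * p) ^ p * w₁ ^ p * |τ₁ - τ₂| ^ p := by
    have h1 := Real.rpow_nonneg (abs_nonneg (τ₁ - τ₂)) p
    have h2 := Real.rpow_nonneg hw1 p
    have h3 := Real.rpow_nonneg (by linarith : (0:ℝ) ≤ 2 * p) p
    positivity
  rcases le_total τ₂ τ₁ with hτ | hτ
  · -- easy case: τ₁ is the max
    rw [max_eq_left hτ]
    have ht : τ₂ ^ p ≤ τ₁ ^ p := Real.rpow_le_rpow ht2 hτ hp0.le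
    have key : w * τ₁ ^ p ≤ w₁ * τ₁ ^ p - w₂ * τ₂ ^ p := by
      have h3 : w₂ * τ₂ ^ p ≤ w₂ * τ₁ ^ p := mul_le_mul_of_nonneg_left ht h2
      rw [hw]; nlinarith
    have hmono : w ^ (p - 1) * (w * τ₁ ^ p) ≤ w ^ (p - 1) * (w₁ * τ₁ ^ p - w₂ * τ₂ ^ p) :=
      mul_le_mul_of_nonneg_left key hwp
    have hrw : w ^ (p - 1) * (w * τ₁ ^ p) = w ^ p * τ₁ ^ p := by
      rw [← mul_assoc, rpow_pred_mul hw0 hpne]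
    have hpos : 0 ≤ w ^ p * τ₁ ^ p :=
      mul_nonneg (Real.rpow_nonneg hw0 _) (Real.rpow_nonneg ht1 _)
    rw [ge_iff_le]
    calc (1 / 2) * w ^ p * τ₁ ^ p - (2 * p) ^ p * w₁ ^ p * |τ₁ - τ₂| ^ p
        ≤ (1 / 2) * (w ^ p * τ₁ ^ p) := by linarith
      _ ≤ w ^ p * τ₁ ^ p := by linarith
      _ = w ^ (p - 1) * (w * τ₁ ^ p) := hrw.symm
      _ ≤ _ := hmono
  · -- hard case: τ₂ is the max
    rw [max_eq_right hτ]
    set δ : ℝ := τ₂ - τ₁ with hδ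
    clear_value δ
    have hδ0 : 0 ≤ δ := by rw [hδ]; linarith
    have habs : |τ₁ - τ₂| = δ := by rw [abs_sub_comm, hδ, abs_of_nonneg (by linarith)]
    rw [habs]
    have hE : τ₂ ^ p - τ₁ ^ p ≤ p * τ₂ ^ (p - 1) * δ := by
      rw [hδ]; exact rpow_sub_rpow_le ht1 hτ hp.le
    have hsplit : w₁ * τ₁ ^ p - w₂ * τ₂ ^ p = w * τ₂ ^ p - w₁ * (τ₂ ^ p - τ₁ ^ p) := by
      rw [hw]; ring
    rw [hsplit, mul_sub, ← mul_assoc, rpow_pred_mul hw0 hpne]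
    rw [ge_iff_le, sub_le_sub_iff]
    have hwτ : 0 ≤ w * τ₂ := mul_nonneg hw0 ht2
    have hwτp : 0 ≤ (w * τ₂) ^ (p - 1) := Real.rpow_nonneg hwτ _
    have step1 : w ^ (p - 1) * (w₁ * (τ₂ ^ p - τ₁ ^ p)) ≤ p * (w * τ₂) ^ (p - 1) * (w₁ * δ) := by
      have hE' : w₁ * (τ₂ ^ p - τ₁ ^ p) ≤ w₁ * (p * τ₂ ^ (p - 1) * δ) :=
        mul_le_mul_of_nonneg_left hE hw1
      have hmul : (w * τ₂) ^ (p - 1) = w ^ (p - 1) * τ₂ ^ (p - 1) :=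
        Real.mul_rpow hw0 ht2
      calc w ^ (p - 1) * (w₁ * (τ₂ ^ p - τ₁ ^ p))
          ≤ w ^ (p - 1) * (w₁ * (p * τ₂ ^ (p - 1) * δ)) :=
            mul_le_mul_of_nonneg_left hE' hwp
        _ = p * (w ^ (p - 1) * τ₂ ^ (p - 1)) * (w₁ * δ) := by ring
        _ = p * (w * τ₂) ^ (p - 1) * (w₁ * δ) := by rw [hmul]
    have step2 : p * (w * τ₂) ^ (p - 1) * (w₁ * δ) ≤
        (1 / 2) * w ^ p * τ₂ ^ p + (2 * p) ^ p * w₁ ^ p * δ ^ p := by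
      have hwd : 0 ≤ w₁ * δ := mul_nonneg hw1 hδ0
      have hδp : 0 ≤ δ ^ p := Real.rpow_nonneg hδ0 p
      have hw1p : 0 ≤ w₁ ^ p := Real.rpow_nonneg hw1 p
      have hwpp : 0 ≤ w ^ p := Real.rpow_nonneg hw0 p
      have hτ2p : 0 ≤ τ₂ ^ p := Real.rpow_nonneg ht2 p
      have h2pp : 0 ≤ (2 * p) ^ p := Real.rpow_nonneg (by linarith) p
      rcases le_total (2 * p * (w₁ * δ)) (w * τ₂) with hc | hc
      · -- absorbed in first term
        have h1 : p * (w * τ₂) ^ (p - 1) * (w₁ * δ) ≤ (w * τ₂) ^ (p - 1) * ((w * τ₂) / 2) := by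
          have hx : p * (w₁ * δ) ≤ (w * τ₂) / 2 := by linarith
          nlinarith [mul_le_mul_of_nonneg_left hx hwτp]
        have h2 : (w * τ₂) ^ (p - 1) * (w * τ₂) = (w * τ₂) ^ p := rpow_pred_mul hwτ hpne
        have h3 : (w * τ₂) ^ p = w ^ p * τ₂ ^ p := Real.mul_rpow hw0 ht2
        nlinarith [mul_nonneg (mul_nonneg h2pp hw1p) hδp]
      · -- absorbed in second term
        have h1 : (w * τ₂) ^ (p - 1) ≤ (2 * p * (w₁ * δ)) ^ (p - 1) :=
          Real.rpow_le_rpow hwτ hc hp1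
        have h2 : (2 * p * (w₁ * δ)) ^ (p - 1) = (2 * p) ^ (p - 1) * (w₁ * δ) ^ (p - 1) :=
          Real.mul_rpow (by linarith) hwd
        have h3 : (w₁ * δ) ^ (p - 1) * (w₁ * δ) = (w₁ * δ) ^ p := rpow_pred_mul hwd hpne
        have h4 : (w₁ * δ) ^ p = w₁ ^ p * δ ^ p := Real.mul_rpow hw1 hδ0
        have h5 : p * (2 * p) ^ (p - 1) ≤ (2 * p) ^ p := by
          have h6 : (2 * p) ^ (p - 1) * (2 * p) = (2 * p) ^ p :=
            rpow_pred_mul (by linarith) hpne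
          nlinarith [Real.rpow_nonneg (by linarith : (0:ℝ) ≤ 2 * p) (p - 1)]
        have h8 : 0 ≤ (w₁ * δ) ^ p := Real.rpow_nonneg hwd p
        have h9 : p * (w * τ₂) ^ (p - 1) * (w₁ * δ) ≤ p * (2 * p) ^ (p - 1) * (w₁ * δ) ^ p := by
          calc p * (w * τ₂) ^ (p - 1) * (w₁ * δ)
              ≤ p * ((2 * p) ^ (p - 1) * (w₁ * δ) ^ (p - 1)) * (w₁ * δ) :=
                mul_le_mul_of_nonneg_right
                  (mul_le_mul_of_nonneg_left (h1.trans_eq h2) hp0.le) hwd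
            _ = p * (2 * p) ^ (p - 1) * ((w₁ * δ) ^ (p - 1) * (w₁ * δ)) := by ring
            _ = p * (2 * p) ^ (p - 1) * (w₁ * δ) ^ p := by rw [h3]
        calc p * (w * τ₂) ^ (p - 1) * (w₁ * δ) ≤ p * (2 * p) ^ (p - 1) * (w₁ * δ) ^ p := h9
          _ ≤ (2 * p) ^ p * (w₁ * δ) ^ p := mul_le_mul_of_nonneg_right h5 h8
          _ = (2 * p) ^ p * (w₁ ^ p * δ ^ p) := by rw [h4]
          _ ≤ (1 / 2) * w ^ p * τ₂ ^ p + (2 * p) ^ p * w₁ ^ p * δ ^ p := by nlinarith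
    calc (1 / 2) * w ^ p * τ₂ ^ p + w ^ (p - 1) * (w₁ * (τ₂ ^ p - τ₁ ^ p))
        ≤ (1 / 2) * w ^ p * τ₂ ^ p +
            ((1 / 2) * w ^ p * τ₂ ^ p + (2 * p) ^ p * w₁ ^ p * δ ^ p) := by
          linarith [step1.trans step2]
      _ = w ^ p * τ₂ ^ p + (2 * p) ^ p * w₁ ^ p * δ ^ p := by ring
end

section
/- Let p > 1. For every t ∈ (0, 1/2] one has (1 − t^{1−p})/(1 − t) ≤ −((p − 1)/2^p)·t^{1−p}/(1 − t). -/
lemma two_rpow_sub_one (p : ℝ) : (2:ℝ) ^ (p - 1) = 2 ^ p / 2 := by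
  rw [Real.rpow_sub (by norm_num), Real.rpow_one]

lemma two_rpow_ge_add_one (p : ℝ) (hp : 1 ≤ p) : p + 1 ≤ (2:ℝ) ^ p := by
  have hlog : (0.6931471803 : ℝ) < Real.log 2 := Real.log_two_gt_d9
  have h1 : (p - 1) * Real.log 2 + 1 ≤ Real.exp ((p - 1) * Real.log 2) :=
    Real.add_one_le_exp _
  have h2 : (2:ℝ) ^ (p - 1) = Real.exp ((p - 1) * Real.log 2) := by
    rw [Real.rpow_def_of_pos (by norm_num)]; ring_nf
  have h3 := two_rpow_sub_one p
  rw [h2] at h3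
  nlinarith [h1, hlog, hp]

/-- Refined upper bound for `g(t) = (1 - t^{1-p})/(1 - t)` on `(0, 1/2]`. -/
theorem stmt_7 (p : ℝ) (hp : 1 < p) :
    ∀ t ∈ Set.Ioc (0 : ℝ) (1 / 2),
      (1 - t ^ (1 - p)) / (1 - t) ≤ -((p - 1) / 2 ^ p) * (t ^ (1 - p) / (1 - t)) := by
  rintro t ⟨ht0, ht2⟩
  have h1t : (0:ℝ) < 1 - t := by linarith
  set A := t ^ (1 - p) with hA
  have hA0 : 0 < A := Real.rpow_pos_of_pos ht0 _
  have h2p : (0:ℝ) < (2:ℝ) ^ p := Real.rpow_pos_of_pos (by norm_num) _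
  have hge : (2:ℝ) ^ (p - 1) ≤ A := by
    have h := Real.rpow_le_rpow_of_nonpos ht0 ht2 (by linarith : 1 - p ≤ 0)
    calc (2:ℝ) ^ (p - 1) = ((1:ℝ)/2) ^ (1 - p) := by
          rw [one_div, Real.inv_rpow (by norm_num), ← Real.rpow_neg (by norm_num),
            neg_sub]
      _ ≤ A := h
  have hp1 : (2:ℝ) ^ (p - 1) * ((p - 1) / 2 ^ p) = (p - 1) / 2 := by
    rw [two_rpow_sub_one]
    field_simp
  have hkey : 2 ^ p ≥ p + 1 := two_rpow_ge_add_one p hp.le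
  have hc : (p - 1) / 2 ^ p < 1 := by
    rw [div_lt_one h2p]; linarith
  have hnum : 1 - A ≤ -((p - 1) / 2 ^ p) * A := by
    have h5 : (2:ℝ) ^ (p - 1) * (1 - (p - 1) / 2 ^ p) ≤ A * (1 - (p - 1) / 2 ^ p) :=
      mul_le_mul_of_nonneg_right hge (by linarith)
    have h6 : (2:ℝ) ^ (p - 1) * (1 - (p - 1) / 2 ^ p)
        = 2 ^ (p - 1) - (p - 1) / 2 := by
      rw [mul_sub, hp1, mul_one]
    have h7 : (1:ℝ) ≤ 2 ^ (p - 1) - (p - 1) / 2 := by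
      rw [two_rpow_sub_one]; linarith
    nlinarith [h5, h6, h7]
  have heq : -((p - 1) / 2 ^ p) * (A / (1 - t)) = (-((p - 1) / 2 ^ p) * A) / (1 - t) := by
    ring
  rw [heq]
  gcongr
end

section
/- For every p > 1 there exists a constant c ≥ 1 depending only on p such that for all real numbers a ≥ b ≥ 0, all d > 0 and all σ, τ ≥ 0, (a − b)^{p−1}·( σ^p/(a + d)^{p−1} − τ^p/(b + d)^{p−1} ) ≤ −(1/c)·(log((a + d)/(b + d)))^p·τ^p + c·|σ − τ|^p. -/
open Real Set

lemma aux_bern {q u : ℝ} (hq : 0 < q) (hu0 : 0 ≤ u) (hu1 : u ≤ 1) :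
    (1 - u) ^ q ≤ 1 - min 1 q * u := by
  rcases le_total q 1 with h | h
  · have hb := rpow_one_add_le_one_add_mul_self (s := -u) (by linarith) hq.le h
    rw [min_eq_right h]
    have : (1 : ℝ) + -u = 1 - u := by ring
    rw [this] at hb
    linarith
  · rw [min_eq_left h]
    rcases eq_or_lt_of_le hu1 with rfl | hu1'
    · simp [Real.zero_rpow hq.ne']
    · have h2 : (1 - u) ^ q ≤ (1 - u) ^ (1 : ℝ) :=
        rpow_le_rpow_of_exponent_ge (by linarith) (by linarith) h
      rw [Real.rpow_one] at h2; linarith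

lemma aux_conv {p : ℝ} (hp : 1 ≤ p) {lam : ℝ} (hl0 : 0 < lam) (hl1 : lam < 1)
    {x y : ℝ} (hx : 0 ≤ x) (hy : 0 ≤ y) :
    (x + y) ^ p ≤ lam ^ (1 - p) * x ^ p + (1 - lam) ^ (1 - p) * y ^ p := by
  have hμ : 0 < 1 - lam := by linarith
  have hc := (convexOn_rpow hp).2 (x := x / lam) (y := y / (1 - lam))
    (mem_Ici.2 (div_nonneg hx hl0.le)) (mem_Ici.2 (div_nonneg hy hμ.le))
    hl0.le hμ.le (by ring)
  simp only [smul_eq_mul] at hc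
  have hxy : lam * (x / lam) + (1 - lam) * (y / (1 - lam)) = x + y := by
    field_simp
  rw [hxy] at hc
  have h1 : lam * (x / lam) ^ p = lam ^ (1 - p) * x ^ p := by
    rw [Real.div_rpow hx hl0.le, Real.rpow_sub hl0, Real.rpow_one]
    field_simp
  have h2 : (1 - lam) * (y / (1 - lam)) ^ p = (1 - lam) ^ (1 - p) * y ^ p := by
    rw [Real.div_rpow hy hμ.le, Real.rpow_sub hμ, Real.rpow_one]
    field_simp
  rw [h1, h2] at hc; exact hc

lemma aux_invpow {x : ℝ} (hx : 0 < x) (y : ℝ) : (x⁻¹) ^ y = x ^ (-y) := by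
  rw [Real.inv_rpow hx.le, ← Real.rpow_neg hx.le]

lemma aux_split {p : ℝ} (hp : 1 ≤ p) {x y ε : ℝ} (hx : 0 ≤ x) (hy : 0 ≤ y) (hε : 0 < ε) :
    (x + y) ^ p ≤ (1 + ε) ^ (p - 1) * x ^ p + (1 + 1/ε) ^ (p - 1) * y ^ p := by
  have h1ε : (0:ℝ) < 1 + ε := by linarith
  have hl0 : (0:ℝ) < 1/(1+ε) := by positivity
  have hl1 : 1/(1+ε) < 1 := by rw [div_lt_one h1ε]; linarith
  have hc := aux_conv hp hl0 hl1 hx hy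
  have e1 : (1/(1+ε) : ℝ) ^ (1-p) = (1+ε)^(p-1) := by
    rw [one_div, aux_invpow h1ε]
    congr 1; ring
  have e2 : (1 - 1/(1+ε) : ℝ) ^ (1-p) = (1+1/ε)^(p-1) := by
    have h : (1 - 1/(1+ε) : ℝ) = ((1+1/ε))⁻¹ := by
      rw [inv_eq_one_div, eq_div_iff (by positivity)]
      field_simp
      ring
    rw [h, aux_invpow (by positivity)]
    congr 1; ring
  rw [e1, e2] at hc; exact hc

lemma aux_log_le {x α : ℝ} (hx : 1 ≤ x) (hα : 0 < α) : Real.log x ≤ x ^ α / α := by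
  have hx0 : 0 < x := lt_of_lt_of_le one_pos hx
  have h1 : Real.log (x ^ α) = α * Real.log x := Real.log_rpow hx0 α
  have h2 : Real.log (x ^ α) ≤ x ^ α - 1 := Real.log_le_sub_one_of_pos (rpow_pos_of_pos hx0 α)
  rw [le_div_iff₀ hα]
  nlinarith

lemma aux_K_ge_one {p : ℝ} (hp : 1 < p) : 1 ≤ (p/(p-1))^p * (2:ℝ)^(p-1) := by
  have h1 : (1:ℝ) ≤ p/(p-1) := (one_le_div (by linarith)).2 (by linarith)
  have h2 : (1:ℝ) ≤ (p/(p-1))^p := by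
    calc (1:ℝ) = 1 ^ p := (Real.one_rpow p).symm
    _ ≤ (p/(p-1))^p := Real.rpow_le_rpow zero_le_one h1 (by linarith)
  have h3 : (1:ℝ) ≤ (2:ℝ)^(p-1) := by
    calc (1:ℝ) = 1 ^ (p-1) := (Real.one_rpow _).symm
    _ ≤ (2:ℝ)^(p-1) := Real.rpow_le_rpow zero_le_one one_le_two (by linarith)
  nlinarith

lemma aux_key2 {p t : ℝ} (hp : 1 < p) (ht : 0 < t) :
    Real.log (1+t) ^ p * (1+t) ≤ 2 * ((p/(p-1))^p * (2:ℝ)^(p-1)) * t ^ p := by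
  set K := (p/(p-1))^p * (2:ℝ)^(p-1) with hK
  have hK1 : 1 ≤ K := aux_K_ge_one hp
  have hL0 : 0 ≤ Real.log (1+t) := Real.log_nonneg (by linarith)
  have htp : 0 ≤ t ^ p := (rpow_pos_of_pos ht p).le
  rcases le_total t 1 with h | h
  · have hLt : Real.log (1+t) ≤ t := by
      have := Real.log_le_sub_one_of_pos (show (0:ℝ) < 1 + t by linarith)
      linarith
    have h1 : Real.log (1+t) ^ p ≤ t ^ p := Real.rpow_le_rpow hL0 hLt (by linarith)
    have h2 : Real.log (1+t) ^ p * (1+t) ≤ t ^ p * 2 :=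
      mul_le_mul h1 (by linarith) (by linarith) htp
    nlinarith
  · set α := (p-1)/p with hα
    have hp0 : (0:ℝ) < p := by linarith
    have hα0 : 0 < α := div_pos (by linarith) hp0
    have hLb : Real.log (1+t) ≤ (2*t) ^ α / α := by
      have h1 : Real.log (1+t) ≤ (1+t) ^ α / α := aux_log_le (by linarith) hα0
      have h2 : (1+t) ^ α ≤ (2*t) ^ α :=
        Real.rpow_le_rpow (by linarith) (by linarith) hα0.le
      calc Real.log (1+t) ≤ (1+t) ^ α / α := h1
      _ ≤ (2*t) ^ α / α := by gcongr
    have hαp : α * p = p - 1 := by rw [hα, div_mul_cancel₀ _ hp0.ne']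
    have h2t : (0:ℝ) ≤ 2*t := by linarith
    have hRHS : ((2*t) ^ α / α) ^ p = 2^(p-1) * t^(p-1) * (p/(p-1))^p := by
      rw [Real.div_rpow (Real.rpow_nonneg h2t α) hα0.le, ← Real.rpow_mul h2t, hαp,
          Real.mul_rpow (by norm_num) ht.le, div_eq_mul_inv, ← Real.inv_rpow hα0.le, hα, inv_div]
    have hfin : Real.log (1+t) ^ p ≤ 2^(p-1) * t^(p-1) * (p/(p-1))^p := by
      calc Real.log (1+t) ^ p ≤ ((2*t)^α/α)^p := Real.rpow_le_rpow hL0 hLb hp0.le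
      _ = _ := hRHS
    have htp1 : t^(p-1) * t = t^p := by
      rw [Real.rpow_sub ht, Real.rpow_one, div_mul_cancel₀ _ ht.ne']
    have hmul : Real.log (1+t) ^ p * (1+t) ≤ (2^(p-1)*t^(p-1)*(p/(p-1))^p) * (2*t) :=
      mul_le_mul hfin (by linarith) (by linarith)
        (mul_nonneg (mul_nonneg (Real.rpow_nonneg (by norm_num) _) (Real.rpow_nonneg ht.le _))
          (Real.rpow_nonneg (div_nonneg hp0.le (by linarith)) _))
    have heq : (2^(p-1)*t^(p-1)*(p/(p-1))^p) * (2*t) = 2*K*t^p := by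
      rw [hK, ← htp1]; ring
    linarith

lemma aux_pp_ge_one {p : ℝ} (hp : 1 < p) : 1 ≤ (p/(p-1))^p := by
  have h1 : (1:ℝ) ≤ p/(p-1) := (one_le_div (by linarith)).2 (by linarith)
  calc (1:ℝ) = 1 ^ p := (Real.one_rpow p).symm
  _ ≤ (p/(p-1))^p := Real.rpow_le_rpow zero_le_one h1 (by linarith)

set_option maxHeartbeats 1000000 in
/-- Complete pointwise integrand estimate in the proof of the Logarithmic Lemma. -/
theorem stmt_10 (p : ℝ) (hp : 1 < p) :
    ∃ c : ℝ, 1 ≤ c ∧ ∀ a b d σ τ : ℝ, a ≥ b → b ≥ 0 → 0 < d → 0 ≤ σ → 0 ≤ τ →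
      (a - b) ^ (p - 1) * (σ ^ p / (a + d) ^ (p - 1) - τ ^ p / (b + d) ^ (p - 1)) ≤
        -(1 / c) * (Real.log ((a + d) / (b + d))) ^ p * τ ^ p + c * |σ - τ| ^ p := by
  have hp0 : (0:ℝ) < p := by linarith
  have hp1 : (0:ℝ) < p - 1 := by linarith
  set m := min 1 (p-1) with hm
  have hm0 : 0 < m := lt_min one_pos hp1
  have hm1 : m ≤ 1 := min_le_left _ _
  set K := (p/(p-1))^p * (2:ℝ)^(p-1) with hK
  have hK1 : 1 ≤ K := aux_K_ge_one hp
  have h2p0 : (0:ℝ) ≤ (2:ℝ)^(p-1) := Real.rpow_nonneg (by norm_num) _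
  have hpp := aux_pp_ge_one hp
  refine ⟨4*K/m, ?_, ?_⟩
  · rw [le_div_iff₀ hm0]; nlinarith
  intro a b d σ τ hab hb hd hσ hτ
  set c := 4*K/m with hc
  have hc0 : 0 < c := div_pos (by linarith) hm0
  have hc2 : (2:ℝ)^(p-1) ≤ c := by
    rw [hc, le_div_iff₀ hm0]
    nlinarith [mul_le_mul_of_nonneg_left hm1 h2p0, mul_le_mul_of_nonneg_right hpp h2p0]
  have hB : 0 < b + d := by linarith
  have hA : 0 < a + d := by linarith
  have hw : 0 ≤ a - b := by linarith
  have hτp : 0 ≤ τ^p := Real.rpow_nonneg hτ p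
  have habsp : 0 ≤ |σ-τ|^p := Real.rpow_nonneg (abs_nonneg _) p
  rcases eq_or_lt_of_le hw with heq | hwpos
  · -- degenerate case a = b
    have hab' : a = b := by linarith
    subst hab'
    simp only [sub_self]
    rw [Real.zero_rpow hp1.ne', div_self hB.ne', Real.log_one, Real.zero_rpow hp0.ne']
    have h1 : 0 ≤ c * |σ - τ| ^ p := mul_nonneg hc0.le habsp
    nlinarith
  -- main case
  set t := (a-b)/(b+d) with htdef
  have ht : 0 < t := div_pos hwpos hB
  have h1t : (0:ℝ) < 1 + t := by linarith
  have hABt : (a+d) = (b+d)*(1+t) := by rw [htdef]; field_simp; ring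
  have hdivAB : (a+d)/(b+d) = 1+t := by rw [hABt, mul_div_cancel_left₀ _ hB.ne']
  have hwA : (a-b)/(a+d) = t/(1+t) := by
    rw [hABt, div_mul_eq_div_div, ← htdef]
  have e1 : (t/(1+t))^(p-1) = (a-b)^(p-1)/(a+d)^(p-1) := by
    rw [← hwA, Real.div_rpow hw hA.le]
  have e2 : t^(p-1) = (a-b)^(p-1)/(b+d)^(p-1) := by
    rw [htdef, Real.div_rpow hw hB.le]
  have hLHS : (a-b)^(p-1) * (σ^p/(a+d)^(p-1) - τ^p/(b+d)^(p-1))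
      = (t/(1+t))^(p-1) * σ^p - t^(p-1) * τ^p := by
    rw [e1, e2]; ring
  -- Young-type splitting of σ^p
  have hsplit : σ^p ≤ (1+t/2)^(p-1) * τ^p + (1+2/t)^(p-1) * |σ-τ|^p := by
    have hone : (1:ℝ) ≤ (1+t/2)^(p-1) := by
      calc (1:ℝ) = 1^(p-1) := (Real.one_rpow _).symm
      _ ≤ (1+t/2)^(p-1) := Real.rpow_le_rpow zero_le_one (by linarith) (by linarith)
    have habs2 : (0:ℝ) ≤ (1+2/t)^(p-1) * |σ-τ|^p :=
      mul_nonneg (Real.rpow_nonneg (by positivity) _) habsp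
    rcases le_total σ τ with hστ | hστ
    · have h0 : σ^p ≤ τ^p := Real.rpow_le_rpow hσ hστ hp0.le
      have h1 := mul_le_mul_of_nonneg_right hone hτp
      rw [one_mul] at h1
      linarith
    · have h2 := aux_split hp.le hτ (sub_nonneg.2 hστ) (half_pos ht)
      have e0 : τ + (σ - τ) = σ := by ring
      have e3 : 1 + 1/(t/2) = 1 + 2/t := by rw [one_div_div]
      rw [e0, e3] at h2
      rw [abs_of_nonneg (sub_nonneg.2 hστ)]
      exact h2
  have hW0 : 0 ≤ (t/(1+t))^(p-1) := Real.rpow_nonneg (by positivity) _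
  have hP1 : (t/(1+t))^(p-1) * (1+t/2)^(p-1) = (t*(2+t)/(2*(1+t)))^(p-1) := by
    rw [← Real.mul_rpow (by positivity) (by positivity)]
    congr 1; field_simp
  have hP2 : (t/(1+t))^(p-1) * (1+2/t)^(p-1) = ((t+2)/(1+t))^(p-1) := by
    rw [← Real.mul_rpow (by positivity) (by positivity)]
    congr 1; field_simp
  have hP2le : ((t+2)/(1+t))^(p-1) ≤ 2^(p-1) :=
    Real.rpow_le_rpow (by positivity) (by rw [div_le_iff₀ h1t]; linarith) (by linarith)
  -- Key 1 : Bernoulli-type lower bound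
  have hu : t/(2*(1+t)) ≤ 1 := by rw [div_le_one (by positivity)]; linarith
  have hu0 : 0 ≤ t/(2*(1+t)) := by positivity
  have hbern := aux_bern hp1 hu0 hu
  rw [← hm] at hbern
  have htp1 : t^(p-1) * t = t^p := by
    rw [Real.rpow_sub ht, Real.rpow_one, div_mul_cancel₀ _ ht.ne']
  have hKey1 : (t*(2+t)/(2*(1+t)))^(p-1) ≤ t^(p-1) - m * (t^p/(2*(1+t))) := by
    have hP1form : t*(2+t)/(2*(1+t)) = t * (1 - t/(2*(1+t))) := by
      have hne : (2*(1+t) : ℝ) ≠ 0 := by positivity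
      have huu : (1 : ℝ) - t/(2*(1+t)) = (2+t)/(2*(1+t)) := by
        rw [eq_div_iff hne, sub_mul, one_mul, div_mul_cancel₀ _ hne]; ring
      rw [huu, mul_div_assoc]
    have hub : (0:ℝ) ≤ 1 - t/(2*(1+t)) := by linarith
    have h5 : (t * (1 - t/(2*(1+t))))^(p-1) ≤ t^(p-1) * (1 - m * (t/(2*(1+t)))) := by
      rw [Real.mul_rpow ht.le hub]
      exact mul_le_mul_of_nonneg_left hbern (Real.rpow_nonneg ht.le _)
    have h6 : t^(p-1) * (1 - m * (t/(2*(1+t)))) = t^(p-1) - m * ((t^(p-1)*t)/(2*(1+t))) := by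
      ring
    rw [htp1] at h6
    rw [hP1form]
    linarith
  -- Key 2 : logarithm bound
  have hkey2 := aux_key2 hp ht
  rw [← hK] at hkey2
  have hKey2 : (1/c) * Real.log (1+t)^p ≤ m * (t^p/(2*(1+t))) := by
    rw [hc, one_div_div, div_mul_eq_mul_div, div_le_iff₀ (by linarith : (0:ℝ) < 4*K)]
    have h2 : Real.log (1+t)^p ≤ 2*K*t^p/(1+t) := by
      rw [le_div_iff₀ h1t]; linarith
    have h3 : m * (2*K*t^p/(1+t)) = m * (t^p/(2*(1+t))) * (4*K) := by
      field_simp; ring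
    calc m * Real.log (1+t)^p ≤ m * (2*K*t^p/(1+t)) :=
          mul_le_mul_of_nonneg_left h2 hm0.le
    _ = m * (t^p/(2*(1+t))) * (4*K) := h3
  -- assemble
  rw [hLHS, hdivAB]
  have hmul' : (t/(1+t))^(p-1) * σ^p
      ≤ (t*(2+t)/(2*(1+t)))^(p-1)*τ^p + ((t+2)/(1+t))^(p-1)*|σ-τ|^p := by
    calc (t/(1+t))^(p-1)*σ^p
        ≤ (t/(1+t))^(p-1) * ((1+t/2)^(p-1)*τ^p + (1+2/t)^(p-1)*|σ-τ|^p) :=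
          mul_le_mul_of_nonneg_left hsplit hW0
    _ = ((t/(1+t))^(p-1)*(1+t/2)^(p-1))*τ^p + ((t/(1+t))^(p-1)*(1+2/t)^(p-1))*|σ-τ|^p := by
          ring
    _ = _ := by rw [hP1, hP2]
  have s1 := mul_le_mul_of_nonneg_right hKey1 hτp
  have s2 := mul_le_mul_of_nonneg_right hP2le habsp
  have s3 := mul_le_mul_of_nonneg_right hc2 habsp
  have s4 := mul_le_mul_of_nonneg_right hKey2 hτp
  linarith [s1, s2, s3, s4, hmul']
end
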